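/- Fix \alpha \in (0,1], \nu > 0, \xi_0 > 0 and u \in [0,1). Then the generating function of the rescaled PDTP inter-arrival distribution converges to the Laplace transform of the Prabhakar density under the well-scaled limit: \lim_{h \to 0^+} \bar\theta_{\alpha}^{(\nu)}(e^{-sh}; \xi_0 h^{\alpha}) = \xi_0^{\nu}/(\xi_0 + s^{\alpha})^{\nu} for every s > 0, where \bar\theta_{\alpha}^{(\nu)}(u;\xi) = u\, \xi^{\nu}/(\xi + (1-u)^{\alpha})^{\nu}. -/

import Mathlib

open Real Filter Topology

noncomputable def thetaBar (α ν ξ u : ℝ) : ℝ := u * (ξ ^ ν / (ξ + (1 - u) ^ α) ^ ν)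

/-! For `h > 0` the substitution `ξ = ξ₀ h^α` lets `h^α` cancel:
`θ̄(u; ξ₀ h^α) = u ξ₀^ν / (ξ₀ + ((1 - u)/h)^α)^ν`. With `u = e^{-sh}` the difference quotient
`(1 - e^{-sh})/h` tends to the derivative `s` of `h ↦ 1 - e^{-sh}` at `0`, and `u → 1`. -/

theorem tendsto_one_sub_exp_neg_mul_div (s : ℝ) :
    Tendsto (fun h => (1 - exp (-s * h)) / h) (𝓝[≠] 0) (𝓝 s) := by
  have hderiv : HasDerivAt (fun h => 1 - exp (-s * h)) s 0 := by
    simpa using ((hasDerivAt_id (0 : ℝ)).const_mul (-s)).exp.const_sub 1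
  refine hderiv.tendsto_slope_zero.congr fun h => ?_
  simp [div_eq_inv_mul]

theorem rpow_div_add_rpow_of_mul_rpow {ξ h x : ℝ} (α ν : ℝ) (hξ : 0 ≤ ξ) (hh : 0 < h)
    (hx : 0 ≤ x) :
    (ξ * h ^ α) ^ ν / (ξ * h ^ α + x ^ α) ^ ν = ξ ^ ν / (ξ + (x / h) ^ α) ^ ν := by
  have hhα : 0 < h ^ α := rpow_pos_of_pos hh α
  have hx_eq : x ^ α = (x / h) ^ α * h ^ α := by
    rw [← mul_rpow (div_nonneg hx hh.le) hh.le, div_mul_cancel₀ x hh.ne']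
  rw [hx_eq, ← add_mul, mul_rpow hξ hhα.le, mul_rpow (by positivity) hhα.le,
    mul_div_mul_right _ _ (rpow_pos_of_pos hhα ν).ne']

theorem thetaBar_mul_rpow {ξ h u : ℝ} (α ν : ℝ) (hξ : 0 ≤ ξ) (hh : 0 < h) (hu : u ≤ 1) :
    thetaBar α ν (ξ * h ^ α) u = u * (ξ ^ ν / (ξ + ((1 - u) / h) ^ α) ^ ν) := by
  rw [thetaBar, rpow_div_add_rpow_of_mul_rpow α ν hξ hh (sub_nonneg.mpr hu)]

theorem pdtp_pgf_well_scaled_limit_general (α ν ξ₀ : ℝ) (hξ₀ : 0 < ξ₀) (s : ℝ) (hs : 0 < s) :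
    Tendsto (fun h : ℝ => thetaBar α ν (ξ₀ * h ^ α) (Real.exp (-s * h)))
      (nhdsWithin 0 (Set.Ioi 0)) (nhds (ξ₀ ^ ν / (ξ₀ + s ^ α) ^ ν)) := by
  have hden_pos : 0 < ξ₀ + s ^ α := by positivity
  have hexp : Tendsto (fun h => exp (-s * h)) (𝓝[>] 0) (𝓝 1) := by
    have hcont : Continuous fun h : ℝ => exp (-s * h) := by fun_prop
    exact (hcont.tendsto' 0 1 (by simp)).mono_left nhdsWithin_le_nhds
  have hquot := (tendsto_one_sub_exp_neg_mul_div s).mono_left (nhdsGT_le_nhdsNE 0)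
  have hden := ((tendsto_const_nhds (x := ξ₀)).add
    (hquot.rpow_const (Or.inl hs.ne'))).rpow_const (p := ν) (Or.inl hden_pos.ne')
  have hlim := hexp.mul
    ((tendsto_const_nhds (x := ξ₀ ^ ν)).div hden (rpow_pos_of_pos hden_pos ν).ne')
  rw [one_mul] at hlim
  refine hlim.congr' ?_
  filter_upwards [self_mem_nhdsWithin] with h (hh : 0 < h)
  exact (thetaBar_mul_rpow α ν hξ₀.le hh (exp_le_one_iff.mpr (by nlinarith))).symm

/-- the well-scaled limit
lim_{h→0⁺} θ̄_α^{(ν)}(e^{-sh}; ξ₀ hᵅ) = ξ₀^ν/(ξ₀+sᵅ)^ν for every s > 0. -/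
theorem pdtp_pgf_well_scaled_limit (α ν ξ₀ : ℝ) (hα : 0 < α) (hα1 : α ≤ 1)
    (hν : 0 < ν) (hξ₀ : 0 < ξ₀) (s : ℝ) (hs : 0 < s) :
    Tendsto (fun h : ℝ => thetaBar α ν (ξ₀ * h ^ α) (Real.exp (-s * h)))
      (nhdsWithin 0 (Set.Ioi 0)) (nhds (ξ₀ ^ ν / (ξ₀ + s ^ α) ^ ν)) :=
  pdtp_pgf_well_scaled_limit_general α ν ξ₀ hξ₀ s hs
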